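/- arXiv:2307.06620 — 2 statements merged into one kernel-verified Lean document; each statement's English description precedes it below -/
import Mathlib

section
/- Let E be a real Hilbert space, C ⊆ E a closed linear subspace, 0 < μ ≤ L, and let f : E → ℝ be differentiable, μ-strongly convex, with L-Lipschitz gradient. Let x* ∈ C be the minimizer of f over C, let α > 0, and set ζ = max{|1 − αμ|, |1 − αL|}. Then for every x ∈ E and every y* ∈ E, ‖proj_C(x − α∇f(x)) − y*‖ ≤ ζ·‖x − x*‖ + ‖x* − y*‖. -/
open scoped RealInnerProductSpace

section Aux

variable {E : Type*} [NormedAddCommGroup E] [InnerProductSpace ℝ E] [CompleteSpace E]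

/-- Derivative of a function along a line, from its gradient. -/
lemma aux_lineDeriv {h : E → ℝ} {G : E → E} (hg : ∀ x, HasGradientAt h (G x) x)
    (x w : E) (t : ℝ) :
    HasDerivAt (fun s : ℝ => h (x + s • w)) ⟪G (x + t • w), w⟫ t := by
  have hc : HasDerivAt (fun s : ℝ => x + s • w) w t := by
    simpa using ((hasDerivAt_id t).smul_const w).const_add x
  have := (hg (x + t • w)).hasFDerivAt.comp_hasDerivAt t hc
  simpa [InnerProductSpace.toDual_apply_apply, Function.comp_def] using this

/-- First-order inequality for a convex differentiable function. -/
lemma aux_grad_ineq {h : E → ℝ} {G : E → E} (hconv : ConvexOn ℝ Set.univ h)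
    (hg : ∀ x, HasGradientAt h (G x) x) (x y : E) :
    h x + ⟪G x, y - x⟫ ≤ h y := by
  have hq : ConvexOn ℝ Set.univ (fun t : ℝ => h (x + t • (y - x))) := by
    have := hconv.comp_affineMap (AffineMap.lineMap x y : ℝ →ᵃ[ℝ] E)
    have heq : (h ∘ (AffineMap.lineMap x y : ℝ →ᵃ[ℝ] E)) =
        fun t : ℝ => h (x + t • (y - x)) := by
      funext t
      simp [AffineMap.lineMap_apply, vsub_eq_sub, vadd_eq_add, add_comm]
    rw [heq] at this
    simpa using this
  have hd : HasDerivAt (fun t : ℝ => h (x + t • (y - x))) ⟪G x, y - x⟫ 0 := by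
    simpa using aux_lineDeriv hg x (y - x) 0
  have hs := hq.le_slope_of_hasDerivAt (Set.mem_univ (0 : ℝ)) (Set.mem_univ (1 : ℝ))
    one_pos hd
  have h0 : x + (0 : ℝ) • (y - x) = x := by simp
  have h1 : x + (1 : ℝ) • (y - x) = y := by simp
  rw [slope_def_field] at hs
  simp only [h0, h1] at hs
  have : ⟪G x, y - x⟫ ≤ h y - h x := by
    simpa [div_one] using hs
  linarith

/-- A differentiable function with a monotone gradient is convex. -/
lemma aux_convexOn_of_monotone_grad {h : E → ℝ} {G : E → E}
    (hg : ∀ x, HasGradientAt h (G x) x)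
    (hmono : ∀ x y : E, 0 ≤ ⟪G x - G y, x - y⟫) :
    ConvexOn ℝ Set.univ h := by
  refine ⟨convex_univ, fun x _ y _ a b ha hb hab => ?_⟩
  set q : ℝ → ℝ := fun t => h (x + t • (y - x)) with hqdef
  have hq : ∀ t : ℝ, HasDerivAt q ⟪G (x + t • (y - x)), y - x⟫ t :=
    aux_lineDeriv hg x (y - x)
  have hdiff : Differentiable ℝ q := fun t => (hq t).differentiableAt
  have hderiv : deriv q = fun t : ℝ => ⟪G (x + t • (y - x)), y - x⟫ :=
    funext fun t => (hq t).deriv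
  have hmono' : Monotone (deriv q) := by
    rw [hderiv]
    intro s t hst
    rcases eq_or_lt_of_le hst with rfl | hst
    · exact le_rfl
    have key := hmono (x + t • (y - x)) (x + s • (y - x))
    have hdp : (x + t • (y - x)) - (x + s • (y - x)) = (t - s) • (y - x) := by
      rw [sub_smul]; abel
    rw [hdp, real_inner_smul_right, inner_sub_left] at key
    have hts : 0 < t - s := by linarith
    nlinarith
  have hcq : ConvexOn ℝ Set.univ q := Monotone.convexOn_univ_of_deriv hdiff hmono'
  have h2 := hcq.2 (Set.mem_univ (0 : ℝ)) (Set.mem_univ (1 : ℝ)) ha hb hab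
  have hpt : a • x + b • y = x + (a • (0:ℝ) + b • 1) • (y - x) := by
    have ha' : a = 1 - b := by linarith
    subst ha'
    simp [smul_sub, sub_smul, one_smul]
    abel
  calc h (a • x + b • y) = q (a • (0:ℝ) + b • 1) := congrArg h hpt
    _ ≤ a • q 0 + b • q 1 := h2
    _ = a * h x + b * h y := by simp [hqdef]

/-- Gradient of `z ↦ c/2 * ‖z‖²`. -/
lemma aux_hasGradientAt_normsq (c : ℝ) (x : E) :
    HasGradientAt (fun z : E => c / 2 * ‖z‖ ^ 2) (c • x) x := by
  have h1 : HasFDerivAt (fun z : E => ‖z‖ ^ 2) (2 • (innerSL ℝ x)) x :=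
    (hasStrictFDerivAt_norm_sq x).hasFDerivAt
  have h2 := h1.const_mul (c / 2)
  have h3 : (c / 2) • (2 • (innerSL ℝ x)) = InnerProductSpace.toDual ℝ E (c • x) := by
    ext w
    simp [real_inner_smul_left]
    ring
  rw [h3] at h2
  simpa using h2.hasGradientAt

lemma aux_hasGradientAt_sub {f h : E → ℝ} {a b x : E}
    (hf : HasGradientAt f a x) (hh : HasGradientAt h b x) :
    HasGradientAt (fun z => f z - h z) (a - b) x := by
  rw [hasGradientAt_iff_hasFDerivAt, map_sub]
  exact hf.hasFDerivAt.sub hh.hasFDerivAt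

/-- Cocoercivity-type interpolation inequality. -/
lemma aux_cocoercive {φ : E → ℝ} {G : E → E} {l : ℝ} (hl : 0 ≤ l)
    (hg : ∀ x, HasGradientAt φ (G x) x)
    (hφ : ConvexOn ℝ Set.univ φ)
    (hψ : ConvexOn ℝ Set.univ (fun x => l / 2 * ‖x‖ ^ 2 - φ x)) (x y : E) :
    ‖G x - G y‖ ^ 2 ≤ l * ⟪G x - G y, x - y⟫ := by
  have hgψ : ∀ z : E, HasGradientAt (fun x => l / 2 * ‖x‖ ^ 2 - φ x) (l • z - G z) z :=
    fun z => aux_hasGradientAt_sub (aux_hasGradientAt_normsq l z) (hg z)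
  rcases eq_or_lt_of_le hl with rfl | hlpos
  · -- l = 0 : gradient is constant
    have heq : ∀ u v : E, φ v = φ u + ⟪G u, v - u⟫ := by
      intro u v
      have h1 := aux_grad_ineq hφ hg u v
      have h2 := aux_grad_ineq hψ hgψ u v
      simp only [zero_div, zero_mul, zero_smul, zero_sub, zero_mul, inner_neg_left] at h2
      linarith
    have hGG : G x = G y := by
      have key : ∀ w : E, ⟪G x - G y, w⟫ = 0 := by
        intro w
        have e1 : φ (x + w) = φ x + ⟪G x, w⟫ := by
          have := heq x (x + w); simpa using this
        have e2 : φ (x + w) = φ y + ⟪G y, x + w - y⟫ := heq y (x + w)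
        have e3 : φ x = φ y + ⟪G y, x - y⟫ := heq y x
        have e4 : ⟪G y, x + w - y⟫ = ⟪G y, x - y⟫ + ⟪G y, w⟫ := by
          rw [← inner_add_right]; congr 1; abel
        rw [inner_sub_left]
        linarith
      have := key (G x - G y)
      rwa [real_inner_self_eq_norm_sq, pow_eq_zero_iff (n := 2) (by norm_num),
        norm_eq_zero, sub_eq_zero] at this
    simp [hGG]
  · -- l > 0
    have P : ∀ u v : E, φ u + ⟪G u, v - u⟫ + (2 * l)⁻¹ * ‖G v - G u‖ ^ 2 ≤ φ v := by
      intro u v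
      set d : E := G v - G u with hddef
      set z : E := v - l⁻¹ • d with hzdef
      have i := aux_grad_ineq hφ hg u z
      have ii := aux_grad_ineq hψ hgψ v z
      have hzu : z - u = (v - u) - l⁻¹ • d := by rw [hzdef]; abel
      have hzv : z - v = -(l⁻¹ • d) := by rw [hzdef]; abel
      have e1 : ⟪G u, z - u⟫ = ⟪G u, v - u⟫ - l⁻¹ * ⟪G u, d⟫ := by
        rw [hzu, inner_sub_right, real_inner_smul_right]
      have e2 : ⟪l • v - G v, z - v⟫ =
          -(l * l⁻¹ * ⟪v, d⟫) + l⁻¹ * ⟪G v, d⟫ := by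
        rw [hzv, inner_neg_right, inner_sub_left, real_inner_smul_right,
          real_inner_smul_right, real_inner_smul_left]
        ring
      have e3 : ‖z‖ ^ 2 = ‖v‖ ^ 2 - 2 * (l⁻¹ * ⟪v, d⟫) + l⁻¹ ^ 2 * ‖d‖ ^ 2 := by
        rw [hzdef, norm_sub_sq_real, real_inner_smul_right, norm_smul,
          Real.norm_eq_abs, abs_inv, abs_of_pos hlpos]
        ring
      have hll : l * l⁻¹ = 1 := mul_inv_cancel₀ (ne_of_gt hlpos)
      have hgrad_ii : (l / 2) * ‖v‖ ^ 2 - φ v + ⟪l • v - G v, z - v⟫ ≤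
          (l / 2) * ‖z‖ ^ 2 - φ z := ii
      -- turn ii into: φ z ≤ φ v - l⁻¹ * ⟪G v, d⟫ + (2*l)⁻¹ * ‖d‖^2
      have hii' : φ z ≤ φ v - l⁻¹ * ⟪G v, d⟫ + (2 * l)⁻¹ * ‖d‖ ^ 2 := by
        rw [e2, e3] at hgrad_ii
        have h2l : (2 * l)⁻¹ = l / 2 * l⁻¹ ^ 2 := by
          field_simp
        rw [h2l]
        nlinarith [hgrad_ii]
      have hi' : φ u + ⟪G u, v - u⟫ - l⁻¹ * ⟪G u, d⟫ ≤ φ z := by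
        rw [e1] at i; linarith
      have hdd : ⟪G v, d⟫ - ⟪G u, d⟫ = ‖d‖ ^ 2 := by
        rw [← inner_sub_left, ← hddef, real_inner_self_eq_norm_sq]
      have h2l' : l⁻¹ * ‖d‖ ^ 2 = 2 * ((2 * l)⁻¹ * ‖d‖ ^ 2) := by
        field_simp
      nlinarith [hi', hii']
    have P1 := P x y
    have P2 := P y x
    have hrev : ‖G x - G y‖ = ‖G y - G x‖ := norm_sub_rev _ _
    have hinner : ⟪G y, x - y⟫ = -⟪G y, y - x⟫ := by
      rw [← inner_neg_right]; congr 1; abel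
    have hsum : ⟪G x - G y, y - x⟫ + l⁻¹ * ‖G x - G y‖ ^ 2 ≤ 0 := by
      rw [inner_sub_left]
      have h2l : l⁻¹ * ‖G x - G y‖ ^ 2 = 2 * ((2 * l)⁻¹ * ‖G y - G x‖ ^ 2) := by
        rw [← hrev]; field_simp
      rw [h2l]
      have hx2 : ⟪G x - G y, y - x⟫ = ⟪G x, y - x⟫ - ⟪G y, y - x⟫ := inner_sub_left _ _ _
      have hrev2 : ‖G x - G y‖ ^ 2 = ‖G y - G x‖ ^ 2 := by rw [hrev]
      rw [hrev2] at P2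
      linarith [P1, P2, hinner]
    have hneg : ⟪G x - G y, y - x⟫ = -⟪G x - G y, x - y⟫ := by
      rw [← inner_neg_right]; congr 1; abel
    rw [hneg] at hsum
    have := mul_le_mul_of_nonneg_left (by linarith : l⁻¹ * ‖G x - G y‖ ^ 2 ≤ ⟪G x - G y, x - y⟫)
      (le_of_lt hlpos)
    calc ‖G x - G y‖ ^ 2 = l * (l⁻¹ * ‖G x - G y‖ ^ 2) := by
          field_simp
      _ ≤ l * ⟪G x - G y, x - y⟫ := this

end Aux

/-- one-step tracking inequality, eq. (10): for a `μ`-strongly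
convex, `L`-smooth `f` (gradient `g`) with minimizer `x*` over a closed linear
subspace `C` of a real Hilbert space, and for `ζ = max {|1-αμ|, |1-αL|}`,
`‖proj_C (x - α g x) - y*‖ ≤ ζ ‖x - x*‖ + ‖x* - y*‖` for all `x, y*`. -/
theorem one_step_tracking_inequality
    {E : Type*} [NormedAddCommGroup E] [InnerProductSpace ℝ E] [CompleteSpace E]
    (K : Submodule ℝ E) (hK : IsClosed (K : Set E)) [K.HasOrthogonalProjection]
    (μ L : ℝ) (hμ : 0 < μ) (hμL : μ ≤ L)
    (f : E → ℝ) (g : E → E)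
    (hdiff : ∀ x : E, HasGradientAt f (g x) x)
    (hsc : ConvexOn ℝ Set.univ (fun x => f x - μ / 2 * ‖x‖ ^ 2))
    (hlip : ∀ x y : E, ‖g x - g y‖ ≤ L * ‖x - y‖)
    (xstar : E) (hxstar : xstar ∈ K) (hmin : ∀ y ∈ K, f xstar ≤ f y)
    (α : ℝ) (hα : 0 < α)
    (ζ : ℝ) (hζ : ζ = max |1 - α * μ| |1 - α * L|) :
    ∀ (x ystar : E),
      ‖(K.orthogonalProjectionOnto (x - α • g x) : E) - ystar‖ ≤
        ζ * ‖x - xstar‖ + ‖xstar - ystar‖ := by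
  -- gradient of φ₀ := f - μ/2 ‖·‖²
  set G0 : E → E := fun x => g x - μ • x with hG0def
  have hgφ : ∀ x : E, HasGradientAt (fun z => f z - μ / 2 * ‖z‖ ^ 2) (G0 x) x :=
    fun x => aux_hasGradientAt_sub (hdiff x) (aux_hasGradientAt_normsq μ x)
  -- ψ₀ := (L-μ)/2 ‖·‖² - φ₀ = L/2 ‖·‖² - f is convex
  have hψconv : ConvexOn ℝ Set.univ
      (fun x => (L - μ) / 2 * ‖x‖ ^ 2 - (f x - μ / 2 * ‖x‖ ^ 2)) := by
    have heq : (fun x : E => (L - μ) / 2 * ‖x‖ ^ 2 - (f x - μ / 2 * ‖x‖ ^ 2)) =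
        fun x : E => L / 2 * ‖x‖ ^ 2 - f x := by
      funext x; ring
    rw [heq]
    apply aux_convexOn_of_monotone_grad
      (G := fun x => L • x - g x)
      (fun x => aux_hasGradientAt_sub (aux_hasGradientAt_normsq L x) (hdiff x))
    intro x y
    have h1 : (L • x - g x) - (L • y - g y) = L • (x - y) - (g x - g y) := by
      rw [smul_sub]; abel
    rw [h1, inner_sub_left, real_inner_smul_left, real_inner_self_eq_norm_sq]
    have h2 : ⟪g x - g y, x - y⟫ ≤ ‖g x - g y‖ * ‖x - y‖ := real_inner_le_norm _ _
    have h3 := hlip x y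
    nlinarith [norm_nonneg (x - y), norm_nonneg (g x - g y)]
  -- cocoercivity
  have hco := fun x y => aux_cocoercive (l := L - μ) (by linarith) hgφ hsc hψconv x y
  -- orthogonality of the gradient at the minimizer
  have hperp : ∀ w ∈ K, ⟪g xstar, w⟫ = 0 := by
    intro w hw
    have hlm : IsLocalMin (fun t : ℝ => f (xstar + t • w)) 0 := by
      apply Filter.Eventually.of_forall
      intro t
      simp only [zero_smul, add_zero]
      exact hmin _ (K.add_mem hxstar (K.smul_mem t hw))
    have hd : HasDerivAt (fun t : ℝ => f (xstar + t • w)) ⟪g xstar, w⟫ 0 := by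
      simpa using aux_lineDeriv hdiff xstar w 0
    exact hlm.hasDerivAt_eq_zero hd
  -- the projection fixes the gradient step at xstar
  have hPz : K.orthogonalProjectionOnto (g xstar) = 0 := by
    apply Submodule.orthogonalProjectionOnto_apply_of_mem_orthogonal
    rw [Submodule.mem_orthogonal]
    intro u hu
    rw [real_inner_comm]
    exact hperp u hu
  have hPx : (K.orthogonalProjectionOnto (xstar - α • g xstar) : E) = xstar := by
    rw [map_sub, map_smul]
    have h1 : (K.orthogonalProjectionOnto xstar : E) = xstar :=
      Submodule.starProjection_eq_self_iff.mpr hxstar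
    push_cast
    rw [h1, hPz]
    simp
  intro x ystar
  set u : E := x - xstar with hudef
  set v : E := g x - g xstar with hvdef
  set d : E := G0 x - G0 xstar with hddef
  have hdv : d = v - μ • u := by
    rw [hddef, hG0def, hvdef, hudef]
    simp only [smul_sub]
    abel
  have key : ‖d‖ ^ 2 ≤ (L - μ) * ⟪d, u⟫ := hco x xstar
  -- step 1 : ‖d - ((L-μ)/2)•u‖ ≤ (L-μ)/2 * ‖u‖
  have step1 : ‖d - ((L - μ) / 2) • u‖ ≤ (L - μ) / 2 * ‖u‖ := by
    have hexp : ‖d - ((L - μ) / 2) • u‖ ^ 2 =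
        ‖d‖ ^ 2 - (L - μ) * ⟪d, u⟫ + ((L - μ) / 2) ^ 2 * ‖u‖ ^ 2 := by
      rw [norm_sub_sq_real, real_inner_smul_right, norm_smul]
      rw [Real.norm_eq_abs, abs_of_nonneg (by linarith : (0:ℝ) ≤ (L - μ) / 2)]
      ring
    have h1 : ‖d - ((L - μ) / 2) • u‖ ^ 2 ≤ ((L - μ) / 2 * ‖u‖) ^ 2 := by
      rw [hexp, mul_pow]; nlinarith [key]
    have h2 : (0:ℝ) ≤ (L - μ) / 2 * ‖u‖ := mul_nonneg (by linarith) (norm_nonneg _)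
    nlinarith [norm_nonneg (d - ((L - μ) / 2) • u)]
  -- step 2 : vector identity
  have step2 : u - α • v =
      (1 - α * ((μ + L) / 2)) • u - α • (d - ((L - μ) / 2) • u) := by
    rw [hdv]
    module
  -- step 3 : contraction
  have step3 : ‖u - α • v‖ ≤ (|1 - α * ((μ + L) / 2)| + α * ((L - μ) / 2)) * ‖u‖ := by
    rw [step2]
    calc ‖(1 - α * ((μ + L) / 2)) • u - α • (d - ((L - μ) / 2) • u)‖
        ≤ ‖(1 - α * ((μ + L) / 2)) • u‖ + ‖α • (d - ((L - μ) / 2) • u)‖ := norm_sub_le _ _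
      _ = |1 - α * ((μ + L) / 2)| * ‖u‖ + α * ‖d - ((L - μ) / 2) • u‖ := by
          rw [norm_smul, norm_smul, Real.norm_eq_abs, Real.norm_eq_abs,
            abs_of_pos hα]
      _ ≤ |1 - α * ((μ + L) / 2)| * ‖u‖ + α * ((L - μ) / 2 * ‖u‖) := by
          have := mul_le_mul_of_nonneg_left step1 (le_of_lt hα)
          linarith
      _ = (|1 - α * ((μ + L) / 2)| + α * ((L - μ) / 2)) * ‖u‖ := by ring
  -- step 4 : scalar estimate
  have step4 : |1 - α * ((μ + L) / 2)| + α * ((L - μ) / 2) ≤ ζ := by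
    rw [hζ]
    rcases le_total 0 (1 - α * ((μ + L) / 2)) with hm | hm
    · rw [abs_of_nonneg hm]
      have : 1 - α * ((μ + L) / 2) + α * ((L - μ) / 2) = 1 - α * μ := by ring
      rw [this]
      exact le_trans (le_abs_self _) (le_max_left _ _)
    · rw [abs_of_nonpos hm]
      have : -(1 - α * ((μ + L) / 2)) + α * ((L - μ) / 2) = -(1 - α * L) := by ring
      rw [this]
      exact le_trans (neg_le_abs _) (le_max_right _ _)
  have hζ0 : 0 ≤ ζ := by
    rw [hζ]; exact le_trans (abs_nonneg _) (le_max_left _ _)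
  have contraction : ‖u - α • v‖ ≤ ζ * ‖u‖ :=
    le_trans step3 (mul_le_mul_of_nonneg_right step4 (norm_nonneg u))
  -- assemble
  have hvec : (x - α • g x) - (xstar - α • g xstar) = u - α • v := by
    rw [hudef, hvdef, smul_sub]; abel
  have hnonexp : ‖(K.orthogonalProjectionOnto (x - α • g x) : E) -
      (K.orthogonalProjectionOnto (xstar - α • g xstar) : E)‖ ≤
      ‖(x - α • g x) - (xstar - α • g xstar)‖ := by
    have h1 : (K.orthogonalProjectionOnto (x - α • g x) : E) -
        (K.orthogonalProjectionOnto (xstar - α • g xstar) : E) =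
        (K.orthogonalProjectionOnto ((x - α • g x) - (xstar - α • g xstar)) : E) := by
      rw [← Submodule.coe_sub, ← map_sub]
    rw [h1]
    calc ‖(K.orthogonalProjectionOnto ((x - α • g x) - (xstar - α • g xstar)) : E)‖
        ≤ ‖K.orthogonalProjectionOnto‖ * ‖(x - α • g x) - (xstar - α • g xstar)‖ :=
          (K.orthogonalProjectionOnto).le_opNorm _
      _ ≤ 1 * ‖(x - α • g x) - (xstar - α • g xstar)‖ :=
          mul_le_mul_of_nonneg_right (Submodule.orthogonalProjectionOnto_norm_le K) (norm_nonneg _)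
      _ = ‖(x - α • g x) - (xstar - α • g xstar)‖ := one_mul _
  calc ‖(K.orthogonalProjectionOnto (x - α • g x) : E) - ystar‖
      ≤ ‖(K.orthogonalProjectionOnto (x - α • g x) : E) - xstar‖ + ‖xstar - ystar‖ :=
        norm_sub_le_norm_sub_add_norm_sub _ _ _
    _ ≤ ζ * ‖x - xstar‖ + ‖xstar - ystar‖ := by
        have : ‖(K.orthogonalProjectionOnto (x - α • g x) : E) - xstar‖ ≤ ζ * ‖u‖ := by
          rw [← hPx]
          exact le_trans hnonexp (by rw [hvec]; exact contraction)
        rw [hudef] at this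
        linarith
end

section
/- Deterministic version of Proposition 1. Let E be a real Hilbert space, C ⊆ E a closed linear subspace, 0 < μ ≤ L, α > 0, and set ζ = max{|1 − αμ|, |1 − αL|}; assume ζ < 1. Let (f_k)_{k≥0} be functions f_k : E → ℝ, each differentiable, μ-strongly convex, with L-Lipschitz gradient, and for each k let x_k* ∈ C be the minimizer of f_k over C. Assume there exist σ ≥ 0 and ε ≥ 0 such that ‖x_{k+1}* − x_k*‖ ≤ σ for all k, and let (x_k)_{k≥0} ⊆ E satisfy x_{k+1} = proj_C(x_k − α∇f_k(x_k)) + e_k with ‖e_k‖ ≤ ε for all k. Then for all k ≥ 0, ‖x_k − x_k*‖ ≤ ζ^k·‖x_0 − x_0*‖ + (σ + ε)·(1 − ζ^{k+1})/(1 − ζ). -/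
open RealInnerProductSpace

section Aux

variable {E : Type*} [NormedAddCommGroup E] [InnerProductSpace ℝ E] [CompleteSpace E]

private lemma line_hasDerivAt' (f : E → ℝ) (g : E → E) (hdiff : ∀ x, HasGradientAt f (g x) x)
    (x d : E) (t : ℝ) :
    HasDerivAt (fun s : ℝ => f (x + s • d)) ⟪g (x + t • d), d⟫ t := by
  have h1 : HasDerivAt (fun s : ℝ => x + s • d) d t := by
    simpa using ((hasDerivAt_id t).smul_const d).const_add x
  have h2 := (hdiff (x + t • d)).hasFDerivAt
  exact (h2.comp_hasDerivAt t h1).congr_deriv (by simp)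

private lemma convex_grad_lb' (f : E → ℝ) (g : E → E) (hdiff : ∀ x, HasGradientAt f (g x) x)
    (hconv : ConvexOn ℝ Set.univ f) (x y : E) :
    f x + ⟪g x, y - x⟫ ≤ f y := by
  have hφ : ConvexOn ℝ Set.univ (fun t : ℝ => f (x + t • (y - x))) := by
    have := hconv.comp_affineMap (AffineMap.lineMap x y)
    have h2 : ∀ t : ℝ, (1 - t) • x + t • y = x + t • (y - x) := by
      intro t; rw [sub_smul, smul_sub, one_smul]; abel
    simp only [Function.comp_def, AffineMap.lineMap_apply_module, Set.preimage_univ, h2] at this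
    exact this
  have hd : HasDerivAt (fun t : ℝ => f (x + t • (y - x))) ⟪g x, y - x⟫ 0 := by
    simpa using line_hasDerivAt' f g hdiff x (y - x) 0
  have := hφ.le_slope_of_hasDerivAt (Set.mem_univ (0:ℝ)) (Set.mem_univ (1:ℝ)) one_pos hd
  simp only [slope_def_field] at this
  have h1 : (fun t : ℝ => f (x + t • (y - x))) 1 = f y := by simp
  have h0 : (fun t : ℝ => f (x + t • (y - x))) 0 = f x := by simp
  rw [show ((fun t : ℝ => f (x + t • (y - x))) 1 - (fun t : ℝ => f (x + t • (y - x))) 0) / (1 - 0)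
      = f y - f x by rw [h1, h0]; ring] at this
  linarith

private lemma descent_lemma' (f : E → ℝ) (g : E → E) (hdiff : ∀ x, HasGradientAt f (g x) x)
    (L : ℝ) (hlip : ∀ x y, ‖g x - g y‖ ≤ L * ‖x - y‖) (x y : E) :
    f y ≤ f x + ⟪g x, y - x⟫ + L / 2 * ‖y - x‖ ^ 2 := by
  set d := y - x with hd
  set r : ℝ → ℝ := fun t => f (x + t • d) - t * ⟪g x, d⟫ - t ^ 2 * (L / 2) * ‖d‖ ^ 2 with hr
  have hr' : ∀ t : ℝ, HasDerivAt r (⟪g (x + t • d), d⟫ - ⟪g x, d⟫ - 2 * t * (L / 2) * ‖d‖ ^ 2) t := by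
    intro t
    have h1 := line_hasDerivAt' f g hdiff x d t
    have h2 : HasDerivAt (fun t : ℝ => t * ⟪g x, d⟫) ⟪g x, d⟫ t := by
      simpa using (hasDerivAt_id t).mul_const ⟪g x, d⟫
    have h3 : HasDerivAt (fun t : ℝ => t ^ 2 * (L / 2) * ‖d‖ ^ 2) (2 * t * (L / 2) * ‖d‖ ^ 2) t := by
      have := ((hasDerivAt_pow 2 t).mul_const (L / 2)).mul_const (‖d‖ ^ 2)
      simpa [mul_comm, mul_assoc, mul_left_comm] using this
    exact (h1.sub h2).sub h3
  have hanti : AntitoneOn r (Set.Icc (0:ℝ) 1) := by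
    apply antitoneOn_of_deriv_nonpos (convex_Icc 0 1)
    · exact fun t _ => ((hr' t).continuousAt).continuousWithinAt
    · intro t ht
      exact ((hr' t).differentiableAt).differentiableWithinAt
    · intro t ht
      rw [interior_Icc] at ht
      rw [(hr' t).deriv]
      have hb : ⟪g (x + t • d) - g x, d⟫ ≤ L * t * ‖d‖ ^ 2 := by
        calc ⟪g (x + t • d) - g x, d⟫ ≤ ‖g (x + t • d) - g x‖ * ‖d‖ := real_inner_le_norm _ _
          _ ≤ (L * ‖(x + t • d) - x‖) * ‖d‖ := by
              apply mul_le_mul_of_nonneg_right (hlip _ _) (norm_nonneg _)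
          _ = L * t * ‖d‖ ^ 2 := by
              rw [add_sub_cancel_left, norm_smul, Real.norm_eq_abs, abs_of_pos ht.1]; ring
      have : ⟪g (x + t • d), d⟫ - ⟪g x, d⟫ = ⟪g (x + t • d) - g x, d⟫ := by
        rw [inner_sub_left]
      rw [this]
      nlinarith [hb]
  have h01 := hanti (Set.mem_Icc.2 ⟨le_refl 0, zero_le_one⟩)
    (Set.mem_Icc.2 ⟨zero_le_one, le_refl 1⟩) zero_le_one
  have e0 : r 0 = f x := by simp [hr]
  have e1 : r 1 = f y - ⟪g x, d⟫ - L / 2 * ‖d‖ ^ 2 := by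
    have : x + (1:ℝ) • d = y := by rw [one_smul, hd]; abel
    simp only [hr, this, one_pow, one_mul]
  rw [e0, e1] at h01
  linarith

private lemma gradient_sub_half_sq' (f : E → ℝ) (g : E → E) (μ : ℝ) (x : E)
    (h : HasGradientAt f (g x) x) :
    HasGradientAt (fun z => f z - μ / 2 * ‖z‖ ^ 2) (g x - μ • x) x := by
  rw [hasGradientAt_iff_hasFDerivAt] at h ⊢
  have h2 : HasFDerivAt (fun z : E => μ / 2 * ‖z‖ ^ 2) ((μ / 2) • (2 • (innerSL ℝ x))) x :=
    (hasStrictFDerivAt_norm_sq x).hasFDerivAt.const_mul (μ / 2)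
  have h3 := h.sub h2
  refine HasFDerivAt.congr_fderiv h3 ?_
  ext v
  simp [inner_sub_left, real_inner_smul_left]
  ring

private lemma strong_mono' (f : E → ℝ) (g : E → E) (μ : ℝ)
    (hdiff : ∀ x, HasGradientAt f (g x) x)
    (hsc : ConvexOn ℝ Set.univ (fun z => f z - μ / 2 * ‖z‖ ^ 2)) (x y : E) :
    μ * ‖x - y‖ ^ 2 ≤ ⟪g x - g y, x - y⟫ := by
  set h : E → ℝ := fun z => f z - μ / 2 * ‖z‖ ^ 2 with hh
  set gh : E → E := fun z => g z - μ • z with hgh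
  have hdiffh : ∀ z, HasGradientAt h (gh z) z := fun z => gradient_sub_half_sq' f g μ z (hdiff z)
  have hlb : ∀ a b : E, h a + ⟪gh a, b - a⟫ ≤ h b := fun a b =>
    convex_grad_lb' h gh hdiffh hsc a b
  have gh_sub : gh x - gh y = (g x - g y) - μ • (x - y) := by
    simp only [hgh, smul_sub]; abel
  have gh_inner : ⟪gh x - gh y, x - y⟫ = ⟪g x - g y, x - y⟫ - μ * ‖x - y‖ ^ 2 := by
    rw [gh_sub, inner_sub_left, real_inner_smul_left, real_inner_self_eq_norm_sq]
  have h1 := hlb x y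
  have h2 := hlb y x
  have e : ⟪gh x - gh y, x - y⟫ + ⟪gh x, y - x⟫ + ⟪gh y, x - y⟫ = 0 := by
    rw [inner_sub_left, show y - x = -(x - y) by abel, inner_neg_right]; ring
  linarith [gh_inner]

private lemma key_ineq' (f : E → ℝ) (g : E → E) (μ L : ℝ) (hμ : 0 < μ) (hμL : μ ≤ L)
    (hdiff : ∀ x, HasGradientAt f (g x) x)
    (hsc : ConvexOn ℝ Set.univ (fun z => f z - μ / 2 * ‖z‖ ^ 2))
    (hlip : ∀ x y, ‖g x - g y‖ ≤ L * ‖x - y‖) (x y : E) :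
    μ * L * ‖x - y‖ ^ 2 + ‖g x - g y‖ ^ 2 ≤ (μ + L) * ⟪g x - g y, x - y⟫ := by
  set h : E → ℝ := fun z => f z - μ / 2 * ‖z‖ ^ 2 with hh
  set gh : E → E := fun z => g z - μ • z with hgh
  have hdiffh : ∀ z, HasGradientAt h (gh z) z := fun z => gradient_sub_half_sq' f g μ z (hdiff z)
  have hlb : ∀ a b : E, h a + ⟪gh a, b - a⟫ ≤ h b := fun a b =>
    convex_grad_lb' h gh hdiffh hsc a b
  have hdesc : ∀ a b : E, h b ≤ h a + ⟪gh a, b - a⟫ + (L - μ) / 2 * ‖b - a‖ ^ 2 := by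
    intro a b
    have hf := descent_lemma' f g hdiff L hlip a b
    have e1 : ‖b‖ ^ 2 = ‖a‖ ^ 2 + 2 * ⟪a, b - a⟫ + ‖b - a‖ ^ 2 := by
      have := norm_add_sq_real a (b - a)
      simpa using this
    have e2 : ⟪gh a, b - a⟫ = ⟪g a, b - a⟫ - μ * ⟪a, b - a⟫ := by
      rw [hgh]; simp [inner_sub_left, real_inner_smul_left]
    simp only [hh]
    rw [e2]
    nlinarith [hf, e1]
  have gh_sub : ∀ a b : E, gh a - gh b = (g a - g b) - μ • (a - b) := by
    intro a b; simp only [hgh, smul_sub]; abel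
  have gh_inner : ∀ a b : E, ⟪gh a - gh b, a - b⟫ = ⟪g a - g b, a - b⟫ - μ * ‖a - b‖ ^ 2 := by
    intro a b
    rw [gh_sub, inner_sub_left, real_inner_smul_left, real_inner_self_eq_norm_sq]
  have hmono : ∀ a b : E, μ * ‖a - b‖ ^ 2 ≤ ⟪g a - g b, a - b⟫ := fun a b =>
    strong_mono' f g μ hdiff hsc a b
  rcases eq_or_lt_of_le hμL with hEq | hLt
  · subst hEq
    have hm := hmono x y
    have hn : ‖g x - g y‖ ≤ μ * ‖x - y‖ := hlip x y
    have hcs : ⟪g x - g y, x - y⟫ ≤ ‖g x - g y‖ * ‖x - y‖ := real_inner_le_norm _ _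
    nlinarith [norm_nonneg (g x - g y), norm_nonneg (x - y), sq_nonneg (‖g x - g y‖ - μ * ‖x - y‖)]
  · set ν : ℝ := L - μ with hν
    have hν0 : 0 < ν := by linarith
    have hbh : ∀ a b : E, h a + ⟪gh a, b - a⟫ + 1 / (2 * ν) * ‖gh b - gh a‖ ^ 2 ≤ h b := by
      intro a b
      set u : E := gh b - gh a with hu
      set z : E := b - (1 / ν) • u with hz
      have i1 : h a + ⟪gh a, z - a⟫ ≤ h z := hlb a z
      have i2 : h z ≤ h b + ⟪gh b, z - b⟫ + ν / 2 * ‖z - b‖ ^ 2 := hdesc b z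
      have ezb : z - b = -((1 / ν) • u) := by rw [hz]; abel
      have e1 : ⟪gh b, z - b⟫ = -(1 / ν) * ⟪gh b, u⟫ := by
        rw [ezb, inner_neg_right, real_inner_smul_right]; ring
      have e2 : ‖z - b‖ ^ 2 = (1 / ν) ^ 2 * ‖u‖ ^ 2 := by
        rw [ezb, norm_neg, norm_smul, mul_pow, Real.norm_eq_abs, sq_abs]
      have e3 : ⟪gh a, z - a⟫ = ⟪gh a, b - a⟫ - (1 / ν) * ⟪gh a, u⟫ := by
        rw [show z - a = (b - a) - (1 / ν) • u by rw [hz]; abel, inner_sub_right,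
          real_inner_smul_right]
      have e4 : ⟪gh b, u⟫ - ⟪gh a, u⟫ = ‖u‖ ^ 2 := by
        rw [hu, ← inner_sub_left]
        exact real_inner_self_eq_norm_sq _
      rw [e1, e2] at i2
      rw [e3] at i1
      have expand : 1 / (2 * ν) * ‖u‖ ^ 2 = (1 / ν) * ‖u‖ ^ 2 - ν / 2 * ((1 / ν) ^ 2 * ‖u‖ ^ 2) := by
        field_simp; ring
      have e4' : 1 / ν * ⟪gh b, u⟫ - 1 / ν * ⟪gh a, u⟫ = 1 / ν * ‖u‖ ^ 2 := by
        rw [← mul_sub, e4]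
      linarith [i1, i2, e4', expand]
    have hco : (1 / ν) * ‖gh x - gh y‖ ^ 2 ≤ ⟪gh x - gh y, x - y⟫ := by
      have j1 := hbh x y
      have j2 := hbh y x
      have e : ⟪gh x - gh y, x - y⟫ + ⟪gh x, y - x⟫ + ⟪gh y, x - y⟫ = 0 := by
        rw [inner_sub_left, show y - x = -(x - y) by abel, inner_neg_right]; ring
      have e2 : ‖gh x - gh y‖ = ‖gh y - gh x‖ := by rw [← norm_neg]; congr 1; abel
      have e2' : 1 / (2 * ν) * ‖gh x - gh y‖ ^ 2 = 1 / (2 * ν) * ‖gh y - gh x‖ ^ 2 := by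
        rw [e2]
      have expand : (1:ℝ) / ν = 2 * (1 / (2 * ν)) := by field_simp
      rw [expand, e2]
      linarith [j1, j2, e, e2']
    have hgi := gh_inner x y
    have hns : ‖gh x - gh y‖ ^ 2
        = ‖g x - g y‖ ^ 2 - 2 * μ * ⟪g x - g y, x - y⟫ + μ ^ 2 * ‖x - y‖ ^ 2 := by
      rw [gh_sub]
      rw [norm_sub_sq_real, real_inner_smul_right, norm_smul, Real.norm_eq_abs,
        abs_of_pos hμ, mul_pow]
      ring
    have hm := hmono x y
    have key : ν * ⟪gh x - gh y, x - y⟫ ≥ ‖gh x - gh y‖ ^ 2 := by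
      have := mul_le_mul_of_nonneg_left hco hν0.le
      calc ‖gh x - gh y‖ ^ 2 = ν * ((1 / ν) * ‖gh x - gh y‖ ^ 2) := by field_simp
        _ ≤ ν * ⟪gh x - gh y, x - y⟫ := this
    rw [hgi, hns] at key
    have : ν = L - μ := hν
    nlinarith [key]

private lemma quad_bound_case1' (μ L α a b c : ℝ) (hμ : 0 < μ) (hμL : μ ≤ L) (hα : 0 < α)
    (ha0 : 0 ≤ a) (hbμa : μ * a ≤ b)
    (hkey : μ * L * a ^ 2 + b ^ 2 ≤ (μ + L) * c)
    (hcase : α * (μ + L) ≤ 2) :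
    a ^ 2 - 2 * α * c + α ^ 2 * b ^ 2 ≤ (1 - α * μ) ^ 2 * a ^ 2 := by
  have hYpos : 0 ≤ b ^ 2 - (μ * a) ^ 2 := by
    nlinarith [mul_self_le_mul_self (mul_nonneg hμ.le ha0) hbμa]
  have h2 : b ^ 2 - (μ * a) ^ 2 ≤ (μ + L) * (c - μ * a ^ 2) := by nlinarith [hkey]
  have t1 : 2 * α * (b ^ 2 - (μ * a) ^ 2) ≤ 2 * α * ((μ + L) * (c - μ * a ^ 2)) :=
    mul_le_mul_of_nonneg_left h2 (by linarith)
  have t2 : 0 ≤ α * (b ^ 2 - (μ * a) ^ 2) * (2 - α * (μ + L)) :=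
    mul_nonneg (mul_nonneg hα.le hYpos) (by linarith)
  have t3 : 0 ≤ (μ + L) * (2 * α * (c - μ * a ^ 2) - α ^ 2 * (b ^ 2 - (μ * a) ^ 2)) := by
    nlinarith [t1, t2]
  have t4 : 0 ≤ 2 * α * (c - μ * a ^ 2) - α ^ 2 * (b ^ 2 - (μ * a) ^ 2) := by
    by_contra hcon
    push_neg at hcon
    nlinarith [t3]
  nlinarith [t4]

private lemma quad_bound_case2' (μ L α a b c : ℝ) (hμ : 0 < μ) (hμL : μ ≤ L) (hα : 0 < α)
    (hb0 : 0 ≤ b) (hlipw : b ≤ L * a)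
    (hkey : μ * L * a ^ 2 + b ^ 2 ≤ (μ + L) * c)
    (hcase : 2 ≤ α * (μ + L)) :
    a ^ 2 - 2 * α * c + α ^ 2 * b ^ 2 ≤ (1 - α * L) ^ 2 * a ^ 2 := by
  have hYpos : 0 ≤ (L * a) ^ 2 - b ^ 2 := by
    nlinarith [mul_self_le_mul_self hb0 hlipw]
  have h2 : (μ + L) * (L * a ^ 2 - c) ≤ (L * a) ^ 2 - b ^ 2 := by nlinarith [hkey]
  have t1 : 2 * α * ((μ + L) * (L * a ^ 2 - c)) ≤ 2 * α * ((L * a) ^ 2 - b ^ 2) :=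
    mul_le_mul_of_nonneg_left h2 (by linarith)
  have t2 : 0 ≤ α * ((L * a) ^ 2 - b ^ 2) * (α * (μ + L) - 2) :=
    mul_nonneg (mul_nonneg hα.le hYpos) (by linarith)
  have t3 : 0 ≤ (μ + L) * (α ^ 2 * ((L * a) ^ 2 - b ^ 2) - 2 * α * (L * a ^ 2 - c)) := by
    nlinarith [t1, t2]
  have t4 : 0 ≤ α ^ 2 * ((L * a) ^ 2 - b ^ 2) - 2 * α * (L * a ^ 2 - c) := by
    by_contra hcon
    push_neg at hcon
    nlinarith [t3]
  nlinarith [t4]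

omit [CompleteSpace E] in
private lemma contraction_step' (μ L α ζ : ℝ) (hμ : 0 < μ) (hμL : μ ≤ L) (hα : 0 < α)
    (hζ : ζ = max |1 - α * μ| |1 - α * L|)
    (d w : E)
    (hkey : μ * L * ‖d‖ ^ 2 + ‖w‖ ^ 2 ≤ (μ + L) * ⟪w, d⟫)
    (hmono : μ * ‖d‖ ^ 2 ≤ ⟪w, d⟫)
    (hlipw : ‖w‖ ≤ L * ‖d‖) :
    ‖d - α • w‖ ≤ ζ * ‖d‖ := by
  have ha0 : (0:ℝ) ≤ ‖d‖ := norm_nonneg _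
  have hb0 : (0:ℝ) ≤ ‖w‖ := norm_nonneg _
  have hcs : ⟪w, d⟫ ≤ ‖w‖ * ‖d‖ := real_inner_le_norm w d
  have hζ0 : 0 ≤ ζ := by rw [hζ]; exact le_trans (abs_nonneg _) (le_max_left _ _)
  have hζμ2 : (1 - α * μ) ^ 2 ≤ ζ ^ 2 := by
    rw [← sq_abs]
    exact pow_le_pow_left₀ (abs_nonneg _) (hζ ▸ le_max_left _ _) 2
  have hζL2 : (1 - α * L) ^ 2 ≤ ζ ^ 2 := by
    rw [← sq_abs]
    exact pow_le_pow_left₀ (abs_nonneg _) (hζ ▸ le_max_right _ _) 2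
  have hbμa : μ * ‖d‖ ≤ ‖w‖ := by
    rcases eq_or_lt_of_le ha0 with h0 | h0
    · nlinarith [hlipw]
    · nlinarith [hcs, hmono, h0]
  have hexp : ‖d - α • w‖ ^ 2 = ‖d‖ ^ 2 - 2 * α * ⟪w, d⟫ + α ^ 2 * ‖w‖ ^ 2 := by
    rw [norm_sub_sq_real, real_inner_smul_right, norm_smul, Real.norm_eq_abs,
      abs_of_pos hα, mul_pow, real_inner_comm d w]
    ring
  have hsq : ‖d - α • w‖ ^ 2 ≤ ζ ^ 2 * ‖d‖ ^ 2 := by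
    rw [hexp]
    rcases le_or_gt (α * (μ + L)) 2 with hcase | hcase
    · have h1 := quad_bound_case1' μ L α ‖d‖ ‖w‖ ⟪w, d⟫ hμ hμL hα ha0 hbμa hkey hcase
      nlinarith [h1, mul_le_mul_of_nonneg_right hζμ2 (sq_nonneg ‖d‖)]
    · have h1 := quad_bound_case2' μ L α ‖d‖ ‖w‖ ⟪w, d⟫ hμ hμL hα hb0 hlipw hkey hcase.le
      nlinarith [h1, mul_le_mul_of_nonneg_right hζL2 (sq_nonneg ‖d‖)]
  calc ‖d - α • w‖ = Real.sqrt (‖d - α • w‖ ^ 2) := (Real.sqrt_sq (norm_nonneg _)).symm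
    _ ≤ Real.sqrt ((ζ * ‖d‖) ^ 2) := Real.sqrt_le_sqrt (by rw [mul_pow]; exact hsq)
    _ = ζ * ‖d‖ := Real.sqrt_sq (mul_nonneg hζ0 ha0)

private lemma proj_fixed_point' (K : Submodule ℝ E) [K.HasOrthogonalProjection]
    (f : E → ℝ) (g : E → E) (hdiff : ∀ x, HasGradientAt f (g x) x)
    (xs : E) (hxs : xs ∈ K) (hmin : ∀ y ∈ K, f xs ≤ f y) (α : ℝ) :
    (K.orthogonalProjectionOnto (xs - α • g xs) : E) = xs := by
  have horth : g xs ∈ Kᗮ := by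
    rw [Submodule.mem_orthogonal']
    intro y hy
    have hd := line_hasDerivAt' f g hdiff xs y 0
    have hloc : IsLocalMin (fun t : ℝ => f (xs + t • y)) 0 :=
      Filter.Eventually.of_forall fun t => by
        simpa using hmin (xs + t • y) (K.add_mem hxs (K.smul_mem t hy))
    have := hloc.hasDerivAt_eq_zero (by simpa using hd)
    simpa using this
  have h1 : (K.orthogonalProjectionOnto (xs - α • g xs) : E)
      = (K.orthogonalProjectionOnto xs : E) - α • (K.orthogonalProjectionOnto (g xs) : E) := by
    rw [map_sub, map_smul]
    push_cast
    ring_nf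
  rw [h1, ← Submodule.starProjection_apply, K.starProjection_eq_self_iff.2 hxs,
    Submodule.orthogonalProjectionOnto_apply_of_mem_orthogonal horth]
  simp

end Aux


/-- Proposition 1, deterministic version: for the inexact
online projected gradient recursion `x_{k+1} = proj_C(x_k - α ∇f_k(x_k)) + e_k`
with `μ`-strongly convex, `L`-smooth costs `f_k` (gradients `g_k`), minimizers
`x_k*` over the closed subspace `C` drifting by at most `σ`, errors bounded by
`ε`, and `ζ = max {|1-αμ|, |1-αL|} < 1`, one has
`‖x_k - x_k*‖ ≤ ζ^k ‖x_0 - x_0*‖ + (σ + ε)(1 - ζ^{k+1})/(1 - ζ)`. -/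
theorem ftqc_dgd_deterministic_convergence
    {E : Type*} [NormedAddCommGroup E] [InnerProductSpace ℝ E] [CompleteSpace E]
    (K : Submodule ℝ E) (hK : IsClosed (K : Set E)) [K.HasOrthogonalProjection]
    (μ L : ℝ) (hμ : 0 < μ) (hμL : μ ≤ L)
    (α : ℝ) (hα : 0 < α)
    (ζ : ℝ) (hζ : ζ = max |1 - α * μ| |1 - α * L|) (hζ1 : ζ < 1)
    (f : ℕ → E → ℝ) (g : ℕ → E → E)
    (hdiff : ∀ (k : ℕ) (x : E), HasGradientAt (f k) (g k x) x)
    (hsc : ∀ k : ℕ, ConvexOn ℝ Set.univ (fun x => f k x - μ / 2 * ‖x‖ ^ 2))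
    (hlip : ∀ (k : ℕ) (x y : E), ‖g k x - g k y‖ ≤ L * ‖x - y‖)
    (xstar : ℕ → E) (hxstarK : ∀ k, xstar k ∈ K)
    (hxstarMin : ∀ k, ∀ y ∈ K, f k (xstar k) ≤ f k y)
    (σ : ℝ) (hσ : 0 ≤ σ) (hdrift : ∀ k, ‖xstar (k + 1) - xstar k‖ ≤ σ)
    (ε : ℝ) (hε : 0 ≤ ε)
    (x : ℕ → E) (e : ℕ → E) (he : ∀ k, ‖e k‖ ≤ ε)
    (hrec : ∀ k, x (k + 1) = (K.orthogonalProjectionOnto (x k - α • g k (x k)) : E) + e k) :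
    ∀ k, ‖x k - xstar k‖ ≤
      ζ ^ k * ‖x 0 - xstar 0‖ + (σ + ε) * (1 - ζ ^ (k + 1)) / (1 - ζ) := by
  have hζ0 : 0 ≤ ζ := by rw [hζ]; exact le_trans (abs_nonneg _) (le_max_left _ _)
  have hz1 : (0:ℝ) < 1 - ζ := by linarith
  have hσε : (0:ℝ) ≤ σ + ε := by linarith
  -- one-step inequality
  have hstep : ∀ k, ‖x (k + 1) - xstar (k + 1)‖ ≤ ζ * ‖x k - xstar k‖ + (σ + ε) := by
    intro k
    have hfix : (K.orthogonalProjectionOnto (xstar k - α • g k (xstar k)) : E) = xstar k :=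
      proj_fixed_point' K (f k) (g k) (hdiff k) (xstar k) (hxstarK k) (hxstarMin k) α
    have hkey := key_ineq' (f k) (g k) μ L hμ hμL (hdiff k) (hsc k) (hlip k) (x k) (xstar k)
    have hmono := strong_mono' (f k) (g k) μ (hdiff k) (hsc k) (x k) (xstar k)
    have hlipw := hlip k (x k) (xstar k)
    have hcontr : ‖(x k - α • g k (x k)) - (xstar k - α • g k (xstar k))‖
        ≤ ζ * ‖x k - xstar k‖ := by
      have hrw : (x k - α • g k (x k)) - (xstar k - α • g k (xstar k))
          = (x k - xstar k) - α • (g k (x k) - g k (xstar k)) := by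
        rw [smul_sub]; abel
      rw [hrw]
      exact contraction_step' μ L α ζ hμ hμL hα hζ (x k - xstar k)
        (g k (x k) - g k (xstar k)) hkey hmono hlipw
    have hproj : ‖(K.orthogonalProjectionOnto (x k - α • g k (x k)) : E) - xstar k‖
        ≤ ζ * ‖x k - xstar k‖ := by
      conv_lhs => rw [← hfix]
      have hmap : (K.orthogonalProjectionOnto (x k - α • g k (x k)) : E)
          - (K.orthogonalProjectionOnto (xstar k - α • g k (xstar k)) : E)
          = (K.orthogonalProjectionOnto
              ((x k - α • g k (x k)) - (xstar k - α • g k (xstar k))) : E) := by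
        rw [← Submodule.coe_sub, ← map_sub]
      rw [hmap]
      calc ‖(K.orthogonalProjectionOnto
              ((x k - α • g k (x k)) - (xstar k - α • g k (xstar k))) : E)‖
          ≤ ‖K.orthogonalProjectionOnto‖
            * ‖(x k - α • g k (x k)) - (xstar k - α • g k (xstar k))‖ :=
            (K.orthogonalProjectionOnto).le_opNorm _
        _ ≤ 1 * ‖(x k - α • g k (x k)) - (xstar k - α • g k (xstar k))‖ :=
            mul_le_mul_of_nonneg_right (K.orthogonalProjectionOnto_norm_le) (norm_nonneg _)
        _ ≤ ζ * ‖x k - xstar k‖ := by rw [one_mul]; exact hcontr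
    have hdecomp : x (k + 1) - xstar (k + 1)
        = ((K.orthogonalProjectionOnto (x k - α • g k (x k)) : E) - xstar k)
          + e k + (xstar k - xstar (k + 1)) := by
      rw [hrec k]; abel
    calc ‖x (k + 1) - xstar (k + 1)‖
        ≤ ‖(K.orthogonalProjectionOnto (x k - α • g k (x k)) : E) - xstar k‖
          + ‖e k‖ + ‖xstar k - xstar (k + 1)‖ := by
          rw [hdecomp]
          exact le_trans (norm_add_le _ _) (by gcongr; exact norm_add_le _ _)
      _ ≤ ζ * ‖x k - xstar k‖ + ε + σ := by
          have h3 : ‖xstar k - xstar (k + 1)‖ ≤ σ := by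
            rw [norm_sub_rev]; exact hdrift k
          exact add_le_add (add_le_add hproj (he k)) h3
      _ = ζ * ‖x k - xstar k‖ + (σ + ε) := by ring
  intro k
  induction k with
  | zero =>
    have : (σ + ε) * (1 - ζ ^ (0 + 1)) / (1 - ζ) = σ + ε := by
      rw [pow_one]
      field_simp
    rw [pow_zero, one_mul, this]
    linarith [norm_nonneg (x 0 - xstar 0)]
  | succ k ih =>
    have h1 := hstep k
    have h2 : ζ * ‖x k - xstar k‖
        ≤ ζ * (ζ ^ k * ‖x 0 - xstar 0‖ + (σ + ε) * (1 - ζ ^ (k + 1)) / (1 - ζ)) :=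
      mul_le_mul_of_nonneg_left ih hζ0
    have h3 : ζ * (ζ ^ k * ‖x 0 - xstar 0‖ + (σ + ε) * (1 - ζ ^ (k + 1)) / (1 - ζ)) + (σ + ε)
        = ζ ^ (k + 1) * ‖x 0 - xstar 0‖ + (σ + ε) * (1 - ζ ^ (k + 1 + 1)) / (1 - ζ) := by
      have hne : (1 - ζ) ≠ 0 := ne_of_gt hz1
      field_simp
      ring
    linarith [h1, h2, h3.symm.le]
end
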